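/- arXiv:1011.1775 — 3 statements merged into one kernel-verified Lean document; each statement's English description precedes it below -/
import Mathlib

section
/- Let A be a continuous matrix-valued function on an interval I containing t₀ such that A(t) · A(s) = A(s) · A(t) for all t, s ∈ I. Then the Peano–Baker series sums to a matrix exponential: Σ_{n=0}^∞ I_n(t) = exp(∫_{t₀}^t A(τ) dτ) for every t ∈ I. -/
/-!
With `B t = ∫_{t₀}^t A`, pairwise commutation of the values of `A` makes `A s` commute with `B s`,
so the product rule gives `d/ds (B s ^ (n+1)) = (n+1) • A s * B s ^ n`. By the fundamental
theorem of calculus, `∫_{t₀}^t A s * B s ^ n / n! ds = B t ^ (n+1) / (n+1)!`, hence by induction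
the `n`-th Peano–Baker term is `B t ^ n / n!`, and the series is the exponential series of `B t`.
-/

attribute [local instance] Matrix.normedAddCommGroup Matrix.normedSpace

/-- The iterated Peano–Baker integrals: `pbIter A t₀ 0 = 1` (identity matrix) and
`pbIter A t₀ (n+1) t = ∫_{t₀}^t A τ * pbIter A t₀ n τ dτ`. -/
noncomputable def pbIter {d : ℕ} (A : ℝ → Matrix (Fin d) (Fin d) ℝ) (t₀ : ℝ) :
    ℕ → ℝ → Matrix (Fin d) (Fin d) ℝ
  | 0 => fun _ => 1
  | n + 1 => fun t => ∫ τ in t₀..t, A τ * pbIter A t₀ n τ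

open MeasureTheory Set intervalIntegral

namespace Matrix

variable {m : Type*} [Fintype m] [DecidableEq m]

-- Instance search takes the topology of `Matrix` from its `Pi` structure, which is not reducibly
-- the one induced by the local norm instance; these two instances bridge the gap.
noncomputable instance : ENormedAddMonoid (Matrix m m ℝ) := NormedAddGroup.toENormedAddMonoid

instance : TopologicalSpace.PseudoMetrizableSpace (Matrix m m ℝ) :=
  inferInstanceAs (TopologicalSpace.PseudoMetrizableSpace (m → m → ℝ))

noncomputable def mulCLM : Matrix m m ℝ →L[ℝ] Matrix m m ℝ →L[ℝ] Matrix m m ℝ :=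
  LinearMap.toContinuousLinearMap
    (LinearMap.toContinuousLinearMap.toLinearMap ∘ₗ LinearMap.mul ℝ (Matrix m m ℝ))

lemma hasDerivAt_mul {b c : ℝ → Matrix m m ℝ} {b' c' : Matrix m m ℝ} {x : ℝ}
    (hb : HasDerivAt b b' x) (hc : HasDerivAt c c' x) :
    HasDerivAt (fun y => b y * c y) (b' * c x + b x * c') x := by
  rw [add_comm]
  exact mulCLM.hasDerivAt_of_bilinear (fun _ => hb) (fun _ => hc)

lemma commute_intervalIntegral_right {M : Matrix m m ℝ} {f : ℝ → Matrix m m ℝ} {a b : ℝ}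
    (hf : IntervalIntegrable f volume a b) (h : ∀ τ ∈ uIcc a b, Commute M (f τ)) :
    Commute M (∫ τ in a..b, f τ) :=
  calc M * ∫ τ in a..b, f τ = ∫ τ in a..b, M * f τ :=
        ((mulCLM M).intervalIntegral_comp_comm hf).symm
    _ = ∫ τ in a..b, f τ * M := integral_congr fun τ hτ => (h τ hτ).eq
    _ = (∫ τ in a..b, f τ) * M := (mulCLM.flip M).intervalIntegral_comp_comm hf

lemma hasDerivAt_pow_succ_of_commute {B : ℝ → Matrix m m ℝ} {B' : Matrix m m ℝ} {x : ℝ}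
    (hB : HasDerivAt B B' x) (hc : Commute B' (B x)) (n : ℕ) :
    HasDerivAt (fun y => B y ^ (n + 1)) ((n + 1 : ℝ) • (B' * B x ^ n)) x := by
  induction n with
  | zero => simpa using hB
  | succ n ih =>
    have hmove : B x * (B' * B x ^ n) = B' * B x ^ (n + 1) := by
      rw [← mul_assoc, ← hc.eq, mul_assoc, ← pow_succ']
    convert hasDerivAt_mul hB ih using 1
    · simp only [← pow_succ']
    · rw [mul_smul_comm, hmove]
      push_cast
      rw [add_smul, one_smul, add_comm]

lemma intervalIntegral_mul_primitive_pow {A : ℝ → Matrix m m ℝ} {a b : ℝ}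
    (hA : ContinuousOn A (uIcc a b))
    (hcomm : ∀ x ∈ uIcc a b, ∀ y ∈ uIcc a b, Commute (A x) (A y)) (n : ℕ) :
    ∫ τ in a..b, A τ * (∫ σ in a..τ, A σ) ^ n =
      ((n : ℝ) + 1)⁻¹ • (∫ σ in a..b, A σ) ^ (n + 1) := by
  set B : ℝ → Matrix m m ℝ := fun s => ∫ σ in a..s, A σ
  have hB : ContinuousOn B (uIcc a b) :=
    continuousOn_primitive_interval' hA.intervalIntegrable left_mem_uIcc
  have hderiv : ∀ x ∈ Ioo (min a b) (max a b),
      HasDerivAt (fun s => B s ^ (n + 1)) (((n : ℝ) + 1) • (A x * B x ^ n)) x := by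
    intro x hx
    have hxJ : x ∈ uIcc a b := Ioo_subset_Icc_self hx
    have hBx : HasDerivAt B (A x) x :=
      integral_hasDerivAt_right (hA.mono (uIcc_subset_uIcc_left hxJ)).intervalIntegrable
        ((hA.mono Ioo_subset_Icc_self).stronglyMeasurableAtFilter isOpen_Ioo x hx)
        (hA.continuousAt (Filter.mem_of_superset (Ioo_mem_nhds hx.1 hx.2) Ioo_subset_Icc_self))
    refine hasDerivAt_pow_succ_of_commute hBx (commute_intervalIntegral_right
      (hA.mono (uIcc_subset_uIcc_left hxJ)).intervalIntegrable fun y hy => ?_) n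
    exact hcomm x hxJ y (uIcc_subset_uIcc_left hxJ hy)
  have hFTC := integral_eq_sub_of_hasDeriv_right (hB.pow (n + 1))
    (fun x hx => (hderiv x hx).hasDerivWithinAt)
    ((hA.mul (hB.pow n)).intervalIntegrable.smul ((n : ℝ) + 1))
  have hB₀ : B a = 0 := integral_same
  rw [intervalIntegral.integral_smul, Pi.pow_apply, Pi.pow_apply, hB₀, zero_pow n.succ_ne_zero,
    sub_zero] at hFTC
  rw [← hFTC, smul_smul, inv_mul_cancel₀ (by positivity), one_smul]

end Matrix

open scoped Nat

theorem pbIter_eq_smul_pow {d : ℕ} {A : ℝ → Matrix (Fin d) (Fin d) ℝ} {t₀ t : ℝ}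
    (hA : ContinuousOn A (uIcc t₀ t))
    (hcomm : ∀ x ∈ uIcc t₀ t, ∀ y ∈ uIcc t₀ t, Commute (A x) (A y)) (n : ℕ) :
    pbIter A t₀ n t = (n ! : ℝ)⁻¹ • (∫ τ in t₀..t, A τ) ^ n := by
  induction n generalizing t with
  | zero => simp [pbIter]
  | succ n ih =>
    have hsub : ∀ τ ∈ uIcc t₀ t, uIcc t₀ τ ⊆ uIcc t₀ t := fun τ hτ =>
      uIcc_subset_uIcc left_mem_uIcc hτ
    calc pbIter A t₀ (n + 1) t = ∫ τ in t₀..t, A τ * pbIter A t₀ n τ := rfl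
      _ = ∫ τ in t₀..t, (n ! : ℝ)⁻¹ • (A τ * (∫ σ in t₀..τ, A σ) ^ n) :=
        integral_congr fun τ hτ => by
          rw [ih (hA.mono (hsub τ hτ)) (fun x hx y hy => hcomm x (hsub τ hτ hx) y (hsub τ hτ hy)),
            mul_smul_comm]
      _ = (n ! : ℝ)⁻¹ • (((n : ℝ) + 1)⁻¹ • (∫ τ in t₀..t, A τ) ^ (n + 1)) := by
        rw [intervalIntegral.integral_smul, Matrix.intervalIntegral_mul_primitive_pow hA hcomm]
      _ = ((n + 1)! : ℝ)⁻¹ • (∫ τ in t₀..t, A τ) ^ (n + 1) := by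
        rw [smul_smul, Nat.factorial_succ]
        push_cast
        rw [mul_inv, mul_comm]

theorem stmt5_general {d : ℕ} (A : ℝ → Matrix (Fin d) (Fin d) ℝ)
    (I : Set ℝ) (hI : I.OrdConnected) (t₀ : ℝ) (ht₀ : t₀ ∈ I)
    (hA : ContinuousOn A I)
    (hcomm : ∀ t ∈ I, ∀ s ∈ I, A t * A s = A s * A t) :
    ∀ t ∈ I, ∑' n : ℕ, pbIter A t₀ n t = NormedSpace.exp (∫ τ in t₀..t, A τ) := by
  intro t ht
  have hJ : uIcc t₀ t ⊆ I := hI.uIcc_subset ht₀ ht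
  calc ∑' n : ℕ, pbIter A t₀ n t = ∑' n : ℕ, (n ! : ℝ)⁻¹ • (∫ τ in t₀..t, A τ) ^ n :=
        tsum_congr (pbIter_eq_smul_pow (hA.mono hJ) fun x hx y hy => hcomm x (hJ hx) y (hJ hy))
    _ = NormedSpace.exp (∫ τ in t₀..t, A τ) := by rw [NormedSpace.exp_eq_tsum ℝ]

theorem stmt5 {d : ℕ} (hd : 1 ≤ d) (A : ℝ → Matrix (Fin d) (Fin d) ℝ)
    (I : Set ℝ) (hI : I.OrdConnected) (t₀ : ℝ) (ht₀ : t₀ ∈ I)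
    (hA : ContinuousOn A I)
    (hcomm : ∀ t ∈ I, ∀ s ∈ I, A t * A s = A s * A t) :
    ∀ t ∈ I, ∑' n : ℕ, pbIter A t₀ n t = NormedSpace.exp (∫ τ in t₀..t, A τ) :=
  stmt5_general A I hI t₀ ht₀ hA hcomm
end

section
/- Let A be a continuous matrix-valued function on an interval I containing t₀. Then the Peano–Baker series Σ_{n=0}^∞ I_n(t) converges compactly on I: for every compact subinterval J ⊆ I containing t₀, the sequence of partial sums Σ_{k=0}^n I_k(t) converges uniformly in t ∈ J (in any matrix norm) as n → ∞. In particular, for every t ∈ I the series Σ_{n=0}^∞ I_n(t) converges. -/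
/-!
If `‖A τ * X‖ ≤ K * ‖X‖` on an interval around `t₀`, induction gives
`‖I_n(t)‖ ≤ ‖1‖ * K ^ n / n! * |t - t₀| ^ n`, the integral of `|τ - t₀| ^ n` supplying the
factor `1 / (n + 1)`. On a compact interval `A` and `t - t₀` are bounded (for the entrywise sup
norm one may take `K = d * sup ‖A‖`), so the series is dominated by a convergent exponential
series and the Weierstrass M-test applies.
-/

attribute [local instance] Matrix.normedAddCommGroup Matrix.normedSpace

open Set intervalIntegral

theorem Matrix.norm_mul_le_card_mul {m n p α : Type*} [Fintype m] [Fintype n] [Fintype p]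
    [NormedRing α] (X : Matrix m n α) (Y : Matrix n p α) :
    ‖X * Y‖ ≤ Fintype.card n * ‖X‖ * ‖Y‖ := by
  refine (Matrix.norm_le_iff (by positivity)).2 fun i j => ?_
  calc ‖(X * Y) i j‖ ≤ ∑ k, ‖X i k * Y k j‖ := norm_sum_le _ _
    _ ≤ ∑ _k : n, ‖X‖ * ‖Y‖ := Finset.sum_le_sum fun k _ =>
        (norm_mul_le _ _).trans (mul_le_mul (norm_entry_le_entrywise_sup_norm X)
          (norm_entry_le_entrywise_sup_norm Y) (norm_nonneg _) (norm_nonneg _))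
    _ = Fintype.card n * ‖X‖ * ‖Y‖ := by simp [mul_assoc]

theorem abs_integral_abs_pow (x : ℝ) (n : ℕ) :
    |∫ u in (0 : ℝ)..x, |u| ^ n| = |x| ^ (n + 1) / (n + 1) := by
  rcases le_total 0 x with hx | hx
  · have : EqOn (fun u : ℝ => |u| ^ n) (fun u => u ^ n) (uIcc 0 x) := fun u hu => by
      rw [uIcc_of_le hx] at hu
      simp only [abs_of_nonneg hu.1]
    rw [integral_congr this, integral_pow, abs_of_nonneg hx, zero_pow n.succ_ne_zero, sub_zero,
      abs_of_nonneg (div_nonneg (pow_nonneg hx _) n.cast_add_one_pos.le)]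
  · have : EqOn (fun u : ℝ => |u| ^ n) (fun u => (-u) ^ n) (uIcc 0 x) := fun u hu => by
      rw [uIcc_of_ge hx] at hu
      simp only [abs_of_nonpos hu.2]
    rw [integral_congr this, integral_comp_neg (fun u => u ^ n), integral_pow, abs_of_nonpos hx]
    rw [neg_zero, zero_pow n.succ_ne_zero, zero_sub, neg_div, abs_neg,
      abs_of_nonneg (div_nonneg (pow_nonneg (neg_nonneg.2 hx) _) n.cast_add_one_pos.le)]

theorem abs_integral_abs_sub_pow (t₀ t : ℝ) (n : ℕ) :
    |∫ τ in t₀..t, |τ - t₀| ^ n| = |t - t₀| ^ (n + 1) / (n + 1) := by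
  rw [integral_comp_sub_right (fun u => |u| ^ n), sub_self, abs_integral_abs_pow]

theorem norm_integral_le_of_norm_le_mul_abs_sub_pow {E : Type*} [NormedAddCommGroup E]
    [NormedSpace ℝ E] {g : ℝ → E} {c t₀ t : ℝ} {n : ℕ} (hc : 0 ≤ c)
    (hg : ∀ τ ∈ uIcc t₀ t, ‖g τ‖ ≤ c * |τ - t₀| ^ n) :
    ‖∫ τ in t₀..t, g τ‖ ≤ c * (|t - t₀| ^ (n + 1) / (n + 1)) := by
  have hbound : IntervalIntegrable (fun τ => c * |τ - t₀| ^ n) MeasureTheory.volume t₀ t :=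
    (by fun_prop : Continuous fun τ : ℝ => c * |τ - t₀| ^ n).intervalIntegrable _ _
  calc ‖∫ τ in t₀..t, g τ‖ ≤ |∫ τ in t₀..t, c * |τ - t₀| ^ n| :=
        norm_integral_le_abs_of_norm_le
          (MeasureTheory.ae_restrict_of_forall_mem measurableSet_uIoc fun τ hτ =>
            hg τ (uIoc_subset_uIcc hτ)) hbound
    _ = c * (|t - t₀| ^ (n + 1) / (n + 1)) := by
        rw [integral_const_mul, abs_mul, abs_of_nonneg hc, abs_integral_abs_sub_pow]

open scoped Nat

theorem norm_pbIter_le {d : ℕ} {A : ℝ → Matrix (Fin d) (Fin d) ℝ} {t₀ K : ℝ} {s : Set ℝ}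
    (hs : s.OrdConnected) (ht₀ : t₀ ∈ s) (hK0 : 0 ≤ K)
    (hK : ∀ τ ∈ s, ∀ X : Matrix (Fin d) (Fin d) ℝ, ‖A τ * X‖ ≤ K * ‖X‖) (n : ℕ) :
    ∀ t ∈ s,
      ‖pbIter A t₀ n t‖ ≤ ‖(1 : Matrix (Fin d) (Fin d) ℝ)‖ * K ^ n / n ! * |t - t₀| ^ n := by
  induction n with
  | zero => simp [pbIter]
  | succ n ih =>
    intro t ht
    have hc : 0 ≤ ‖(1 : Matrix (Fin d) (Fin d) ℝ)‖ * K ^ (n + 1) / n ! := by positivity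
    have hstep := norm_integral_le_of_norm_le_mul_abs_sub_pow
      (g := fun τ => A τ * pbIter A t₀ n τ) hc fun τ hτ => by
        have hτs := hs.uIcc_subset ht₀ ht hτ
        calc ‖A τ * pbIter A t₀ n τ‖ ≤ K * ‖pbIter A t₀ n τ‖ := hK τ hτs _
          _ ≤ K * (‖(1 : Matrix (Fin d) (Fin d) ℝ)‖ * K ^ n / n ! * |τ - t₀| ^ n) :=
            mul_le_mul_of_nonneg_left (ih τ hτs) hK0
          _ = _ := by ring
    refine hstep.trans_eq ?_
    rw [Nat.factorial_succ]
    push_cast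
    field_simp

theorem exists_summable_norm_pbIter_le {d : ℕ} {A : ℝ → Matrix (Fin d) (Fin d) ℝ} {t₀ : ℝ}
    {J : Set ℝ} (hJc : IsCompact J) (hJo : J.OrdConnected) (ht₀ : t₀ ∈ J)
    (hA : ContinuousOn A J) :
    ∃ u : ℕ → ℝ, Summable u ∧ ∀ n, ∀ t ∈ J, ‖pbIter A t₀ n t‖ ≤ u n := by
  obtain ⟨C, hC⟩ := hJc.exists_bound_of_continuousOn hA
  obtain ⟨R, hR⟩ := hJc.exists_bound_of_continuousOn
    (continuousOn_id.sub continuousOn_const : ContinuousOn (fun t => t - t₀) J)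
  obtain ⟨K, hK0, hK⟩ : ∃ K : ℝ, 0 ≤ K ∧
      ∀ τ ∈ J, ∀ X : Matrix (Fin d) (Fin d) ℝ, ‖A τ * X‖ ≤ K * ‖X‖ :=
    ⟨d * max C 0, by positivity, fun τ hτ X => (Matrix.norm_mul_le_card_mul _ _).trans <| by
      rw [Fintype.card_fin]
      gcongr
      exact (hC τ hτ).trans (le_max_left _ _)⟩
  set M := ‖(1 : Matrix (Fin d) (Fin d) ℝ)‖
  refine ⟨fun n => M * (K * R) ^ n / n !, ?_, fun n t ht => ?_⟩
  · simpa only [mul_div_assoc] using (Real.summable_pow_div_factorial (K * R)).mul_left M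
  · calc ‖pbIter A t₀ n t‖ ≤ M * K ^ n / n ! * |t - t₀| ^ n :=
          norm_pbIter_le hJo ht₀ hK0 hK n t ht
      _ ≤ M * K ^ n / n ! * R ^ n := by gcongr; exact hR t ht
      _ = M * (K * R) ^ n / n ! := by ring

theorem stmt7_general {d : ℕ} (A : ℝ → Matrix (Fin d) (Fin d) ℝ)
    (I : Set ℝ) (hI : I.OrdConnected) (t₀ : ℝ) (ht₀ : t₀ ∈ I)
    (hA : ContinuousOn A I) :
    (∀ J : Set ℝ, J ⊆ I → IsCompact J → J.OrdConnected → t₀ ∈ J →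
      TendstoUniformlyOn (fun n t => ∑ k ∈ Finset.range (n + 1), pbIter A t₀ k t)
        (fun t => ∑' k : ℕ, pbIter A t₀ k t) Filter.atTop J) ∧
    (∀ t ∈ I, Summable fun n : ℕ => pbIter A t₀ n t) := by
  refine ⟨fun J hJI hJc hJo ht₀J => ?_, fun t ht => ?_⟩
  · obtain ⟨u, hu, hbound⟩ := exists_summable_norm_pbIter_le hJc hJo ht₀J (hA.mono hJI)
    exact fun v hv => (Filter.tendsto_add_atTop_nat 1).eventually
      (tendstoUniformlyOn_tsum_nat hu hbound v hv)
  · obtain ⟨u, hu, hbound⟩ := exists_summable_norm_pbIter_le isCompact_uIcc ordConnected_uIcc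
      left_mem_uIcc (hA.mono (hI.uIcc_subset ht₀ ht))
    exact Summable.of_norm_bounded hu fun n => hbound n t right_mem_uIcc

theorem stmt7 {d : ℕ} (hd : 1 ≤ d) (A : ℝ → Matrix (Fin d) (Fin d) ℝ)
    (I : Set ℝ) (hI : I.OrdConnected) (t₀ : ℝ) (ht₀ : t₀ ∈ I)
    (hA : ContinuousOn A I) :
    (∀ J : Set ℝ, J ⊆ I → IsCompact J → J.OrdConnected → t₀ ∈ J →
      TendstoUniformlyOn (fun n t => ∑ k ∈ Finset.range (n + 1), pbIter A t₀ k t)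
        (fun t => ∑' k : ℕ, pbIter A t₀ k t) Filter.atTop J) ∧
    (∀ t ∈ I, Summable fun n : ℕ => pbIter A t₀ n t) :=
  stmt7_general A I hI t₀ ht₀ hA
end

section
/- Let A be a continuous matrix-valued function on an interval I containing t₀, and let Φ_A(t; t₀) denote the sum of the Peano–Baker series. Then t ↦ Φ_A(t; t₀) is differentiable on I and solves the homogeneous linear matrix initial value problem: d/dt Φ_A(t; t₀) = A(t) · Φ_A(t; t₀) for all t ∈ I, with Φ_A(t₀; t₀) = 1. -/
attribute [local instance] Matrix.normedAddCommGroup Matrix.normedSpace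

/-!
On a compact interval `[a, b] ⊆ I` containing `t₀` on which `‖A‖ ≤ M`, induction gives
`‖I_n(t)‖ ≤ (d M |t - t₀|)^n / n!`; the factor `d` appears because the entrywise sup norm on
matrices is submultiplicative only up to the dimension. Hence the series converges uniformly on
`[a, b]`, its sum `Φ` is continuous there, and dominated convergence moves the integral through the
sum: `Φ(t) = 1 + ∫_{t₀}^t A Φ`. The fundamental theorem of calculus gives `Φ' = A Φ` on `[a, b]`,
and every point of `I` has such an interval as a neighbourhood within `I`.
-/

open Set MeasureTheory Topology
open scoped Nat Interval

namespace Matrix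

variable {l m n : Type*} [Fintype l] [Fintype m] [Fintype n]

theorem norm_one_le_one [DecidableEq n] : ‖(1 : Matrix n n ℝ)‖ ≤ 1 :=
  (norm_le_iff zero_le_one).2 fun i j => by
    by_cases h : i = j <;> simp [one_apply, h]

theorem norm_mul_le_card_mul_s9 {α : Type*} [NormedRing α] (X : Matrix l m α) (Y : Matrix m n α) :
    ‖X * Y‖ ≤ Fintype.card m * ‖X‖ * ‖Y‖ := by
  refine (norm_le_iff (by positivity)).2 fun i j => ?_
  calc ‖(X * Y) i j‖ ≤ ∑ k, ‖X i k * Y k j‖ := norm_sum_le _ _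
    _ ≤ ∑ _k : m, ‖X‖ * ‖Y‖ := Finset.sum_le_sum fun k _ => (norm_mul_le _ _).trans <|
        mul_le_mul (norm_entry_le_entrywise_sup_norm X) (norm_entry_le_entrywise_sup_norm Y)
          (norm_nonneg _) (norm_nonneg _)
    _ = Fintype.card m * ‖X‖ * ‖Y‖ := by simp [mul_assoc]

end Matrix

theorem hasDerivWithinAt_integral_Icc {E : Type*} [NormedAddCommGroup E] [NormedSpace ℝ E]
    [CompleteSpace E] {f : ℝ → E} {a b t₀ t : ℝ} (hf : ContinuousOn f (Icc a b))
    (ht₀ : t₀ ∈ Icc a b) (ht : t ∈ Icc a b) :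
    HasDerivWithinAt (fun u => ∫ τ in t₀..u, f τ) (f t) (Icc a b) t :=
  haveI : Fact (t ∈ Icc a b) := ⟨ht⟩
  intervalIntegral.integral_hasDerivWithinAt_right
    ((hf.mono (ordConnected_Icc.uIcc_subset ht₀ ht)).intervalIntegrable)
    (hf.stronglyMeasurableAtFilter_nhdsWithin measurableSet_Icc t) (hf t ht)

theorem Set.OrdConnected.exists_Icc_mem_nhdsWithin {I : Set ℝ} (hI : I.OrdConnected) {t₀ t : ℝ}
    (ht₀ : t₀ ∈ I) (ht : t ∈ I) : ∃ a b, Icc a b ⊆ I ∧ t₀ ∈ Icc a b ∧ Icc a b ∈ 𝓝[I] t := by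
  have lower : ∃ a ∈ I, ∀ᶠ s in 𝓝[I] t, a ≤ s := by
    by_cases h : ∃ a ∈ I, a < t
    · obtain ⟨a, ha, hat⟩ := h
      exact ⟨a, ha, mem_nhdsWithin_of_mem_nhds (Ici_mem_nhds hat)⟩
    · push Not at h
      exact ⟨t, ht, eventually_nhdsWithin_of_forall h⟩
  have upper : ∃ b ∈ I, ∀ᶠ s in 𝓝[I] t, s ≤ b := by
    by_cases h : ∃ b ∈ I, t < b
    · obtain ⟨b, hb, htb⟩ := h
      exact ⟨b, hb, mem_nhdsWithin_of_mem_nhds (Iic_mem_nhds htb)⟩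
    · push Not at h
      exact ⟨t, ht, eventually_nhdsWithin_of_forall h⟩
  obtain ⟨a, ha, hle⟩ := lower
  obtain ⟨b, hb, hge⟩ := upper
  refine ⟨min a t₀, max b t₀, hI.out (min_rec' (· ∈ I) ha ht₀) (max_rec' (· ∈ I) hb ht₀),
    ⟨min_le_right _ _, le_max_right _ _⟩, ?_⟩
  filter_upwards [hle, hge] with s has hsb
  exact ⟨min_le_of_left_le has, le_max_of_le_left hsb⟩

noncomputable def peanoBaker {d : ℕ} (A : ℝ → Matrix (Fin d) (Fin d) ℝ) (t₀ t : ℝ) :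
    Matrix (Fin d) (Fin d) ℝ :=
  ∑' n, pbIter A t₀ n t

section

variable {d : ℕ} {A : ℝ → Matrix (Fin d) (Fin d) ℝ} {t₀ a b : ℝ} {S : Set ℝ}

theorem norm_pbIter_le_s9 (hS : S.OrdConnected) (ht₀ : t₀ ∈ S) {M : ℝ}
    (hM : ∀ σ ∈ S, ‖A σ‖ ≤ M) (n : ℕ) {σ : ℝ} (hσ : σ ∈ S) :
    ‖pbIter A t₀ n σ‖ ≤ (d * M * |σ - t₀|) ^ n / n ! := by
  induction n generalizing σ with
  | zero => simpa [pbIter] using Matrix.norm_one_le_one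
  | succ n ih =>
    have hbound : ∀ τ ∈ Ι t₀ σ,
        ‖A τ * pbIter A t₀ n τ‖ ≤ (d * M) ^ (n + 1) / n ! * |τ - t₀| ^ n := by
      intro τ hτ
      have hτS : τ ∈ S := hS.uIcc_subset ht₀ hσ (uIoc_subset_uIcc hτ)
      have hM0 : 0 ≤ M := (norm_nonneg _).trans (hM τ hτS)
      calc ‖A τ * pbIter A t₀ n τ‖ ≤ d * ‖A τ‖ * ‖pbIter A t₀ n τ‖ := by
            simpa using Matrix.norm_mul_le_card_mul_s9 (A τ) (pbIter A t₀ n τ)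
        _ ≤ d * M * ((d * M * |τ - t₀|) ^ n / n !) := by gcongr; exacts [hM τ hτS, ih hτS]
        _ = (d * M) ^ (n + 1) / n ! * |τ - t₀| ^ n := by ring
    calc ‖pbIter A t₀ (n + 1) σ‖ = ‖∫ τ in Ι t₀ σ, A τ * pbIter A t₀ n τ‖ :=
          intervalIntegral.norm_intervalIntegral_eq _ _ _ _
      _ ≤ ∫ τ in Ι t₀ σ, (d * M) ^ (n + 1) / n ! * |τ - t₀| ^ n :=
          norm_integral_le_of_norm_le (Continuous.integrableOn_uIoc (by fun_prop))
            ((ae_restrict_mem measurableSet_uIoc).mono hbound)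
      _ = (d * M * |σ - t₀|) ^ (n + 1) / (n + 1)! := by
          rw [integral_const_mul, integral_pow_abs_sub_uIoc, Nat.factorial_succ]
          push_cast
          field_simp
          ring

theorem summable_pbIter (hS : S.OrdConnected) (ht₀ : t₀ ∈ S) {M : ℝ}
    (hM : ∀ σ ∈ S, ‖A σ‖ ≤ M) {σ : ℝ} (hσ : σ ∈ S) : Summable fun n => pbIter A t₀ n σ :=
  .of_norm_bounded (Real.summable_pow_div_factorial _) fun n => norm_pbIter_le_s9 hS ht₀ hM n hσ

theorem continuousOn_pbIter (hA : ContinuousOn A (Icc a b)) (ht₀ : t₀ ∈ Icc a b) (n : ℕ) :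
    ContinuousOn (pbIter A t₀ n) (Icc a b) := by
  induction n with
  | zero => exact continuousOn_const
  | succ n ih => exact fun t ht =>
      (hasDerivWithinAt_integral_Icc (hA.mul ih) ht₀ ht).continuousWithinAt

theorem hasSum_pbIter_succ {u : ℝ} (hA : ContinuousOn A [[t₀, u]]) :
    HasSum (fun n => pbIter A t₀ (n + 1) u) (∫ τ in t₀..u, A τ * peanoBaker A t₀ τ) := by
  obtain ⟨M, hM⟩ := isCompact_uIcc.exists_bound_of_continuousOn hA
  have hsub : Ι t₀ u ⊆ [[t₀, u]] := uIoc_subset_uIcc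
  refine intervalIntegral.hasSum_integral_of_dominated_convergence
    (fun n _ => d * M * ((d * M * |u - t₀|) ^ n / n !))
    (fun n => (intervalIntegrable_iff.1
      (hA.mul (continuousOn_pbIter hA left_mem_uIcc n)).intervalIntegrable).aestronglyMeasurable)
    (fun n => ae_of_all _ fun τ hτ => ?_)
    (ae_of_all _ fun _ _ => (Real.summable_pow_div_factorial _).mul_left _)
    intervalIntegrable_const
    (ae_of_all _ fun τ hτ =>
      (summable_pbIter ordConnected_uIcc left_mem_uIcc hM (hsub hτ)).hasSum.mul_left (A τ))
  have hM0 : 0 ≤ M := (norm_nonneg _).trans (hM τ (hsub hτ))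
  calc ‖A τ * pbIter A t₀ n τ‖ ≤ d * ‖A τ‖ * ‖pbIter A t₀ n τ‖ := by
        simpa using Matrix.norm_mul_le_card_mul_s9 (A τ) (pbIter A t₀ n τ)
    _ ≤ d * M * ((d * M * |τ - t₀|) ^ n / n !) := by
        gcongr
        exacts [hM τ (hsub hτ), norm_pbIter_le_s9 ordConnected_uIcc left_mem_uIcc hM n (hsub hτ)]
    _ ≤ d * M * ((d * M * |u - t₀|) ^ n / n !) := by
        gcongr d * M * ((d * M * ?_) ^ n / n !)
        exact abs_sub_left_of_mem_uIcc (hsub hτ)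

theorem peanoBaker_eq_one_add_integral {u : ℝ} (hA : ContinuousOn A [[t₀, u]]) :
    peanoBaker A t₀ u = 1 + ∫ τ in t₀..u, A τ * peanoBaker A t₀ τ := by
  obtain ⟨M, hM⟩ := isCompact_uIcc.exists_bound_of_continuousOn hA
  have hsum := summable_pbIter ordConnected_uIcc left_mem_uIcc hM right_mem_uIcc
  rw [peanoBaker, hsum.tsum_eq_zero_add, (hasSum_pbIter_succ hA).tsum_eq]
  rfl

theorem continuousOn_peanoBaker_Icc (hA : ContinuousOn A (Icc a b)) (ht₀ : t₀ ∈ Icc a b) :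
    ContinuousOn (peanoBaker A t₀) (Icc a b) := by
  obtain ⟨M, hM⟩ := isCompact_Icc.exists_bound_of_continuousOn hA
  refine continuousOn_tsum (continuousOn_pbIter hA ht₀)
    (Real.summable_pow_div_factorial (d * M * (b - a))) fun n σ hσ => ?_
  have hM0 : 0 ≤ M := (norm_nonneg _).trans (hM σ hσ)
  refine (norm_pbIter_le_s9 ordConnected_Icc ht₀ hM n hσ).trans ?_
  gcongr
  exact Real.dist_le_of_mem_Icc hσ ht₀

theorem hasDerivWithinAt_peanoBaker_Icc (hA : ContinuousOn A (Icc a b)) (ht₀ : t₀ ∈ Icc a b)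
    {t : ℝ} (ht : t ∈ Icc a b) :
    HasDerivWithinAt (peanoBaker A t₀) (A t * peanoBaker A t₀ t) (Icc a b) t := by
  have hint := hasDerivWithinAt_integral_Icc (hA.mul (continuousOn_peanoBaker_Icc hA ht₀)) ht₀ ht
  have heq : ∀ u ∈ Icc a b, peanoBaker A t₀ u = 1 + ∫ τ in t₀..u, A τ * peanoBaker A t₀ τ :=
    fun u hu => peanoBaker_eq_one_add_integral (hA.mono (ordConnected_Icc.uIcc_subset ht₀ hu))
  exact (hint.const_add 1).congr heq (heq t ht)

theorem peanoBaker_self : peanoBaker A t₀ t₀ = 1 := by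
  rw [peanoBaker, tsum_eq_single 0 fun n hn => ?_]
  · rfl
  · obtain ⟨m, rfl⟩ := Nat.exists_eq_succ_of_ne_zero hn
    exact intervalIntegral.integral_same

end

theorem stmt9_general {d : ℕ} (A : ℝ → Matrix (Fin d) (Fin d) ℝ)
    (I : Set ℝ) (hI : I.OrdConnected) (t₀ : ℝ) (ht₀ : t₀ ∈ I)
    (hA : ContinuousOn A I) :
    (∀ t ∈ I, HasDerivWithinAt (fun s => ∑' n : ℕ, pbIter A t₀ n s)
        (A t * ∑' n : ℕ, pbIter A t₀ n t) I t) ∧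
    ∑' n : ℕ, pbIter A t₀ n t₀ = 1 := by
  refine ⟨fun t ht => ?_, peanoBaker_self⟩
  obtain ⟨a, b, hsub, ht₀K, hK⟩ := hI.exists_Icc_mem_nhdsWithin ht₀ ht
  exact (hasDerivWithinAt_peanoBaker_Icc (hA.mono hsub) ht₀K
    (mem_of_mem_nhdsWithin ht hK)).mono_of_mem_nhdsWithin hK

theorem stmt9 {d : ℕ} (hd : 1 ≤ d) (A : ℝ → Matrix (Fin d) (Fin d) ℝ)
    (I : Set ℝ) (hI : I.OrdConnected) (t₀ : ℝ) (ht₀ : t₀ ∈ I)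
    (hA : ContinuousOn A I) :
    (∀ t ∈ I, HasDerivWithinAt (fun s => ∑' n : ℕ, pbIter A t₀ n s)
        (A t * ∑' n : ℕ, pbIter A t₀ n t) I t) ∧
    ∑' n : ℕ, pbIter A t₀ n t₀ = 1 :=
  stmt9_general A I hI t₀ ht₀ hA
end
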